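/- arXiv:1010.4726 — 3 statements merged into one kernel-verified Lean document; each statement's English description precedes it below -/
import Mathlib

section
/- Let N \ge 8, let 1/4 < x < 1/3, let 0 < p < 1 with q = 1-p, let e \in ZMod N, and let d satisfy 2 \le d and 2d+2 < N. With f^0, f^1, f^2 the PMFs on ZMod N defined by f^0(e\pm1)=x, f^0(e)=1-2x; f^1(e-2)=px, f^1(e-1)=p(1-2x), f^1(e)=x, f^1(e+1)=q(1-2x), f^1(e+2)=qx; and f^2(e-d\pm1)=px, f^2(e-d)=p(1-2x), f^2(e+d\pm1)=qx, f^2(e+d)=q(1-2x) (all other values 0), the Shannon entropies in bits satisfy the strict inequalities H(f^0) < H(f^1) and H(f^0) < H(f^2). Hence a creature whose posterior over the source location lies in the information state \mathcal{I}^{0-} has strictly more information about the source's location than one in any other reachable information state. -/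
/-!
Write `η t = -t log t`, so that `η (a * b) = b η a + a η b`. The PMF `f²` consists of two
disjoint copies of `f⁰`, scaled by `p` and `q = 1 - p`, hence `H(f²) = H(f⁰) + h(p)` with `h` the
binary entropy. In `f¹` the two copies overlap at `e`, where the masses `p x` and `q x` recombine
into `x`, so only the mass `1 - x` is split and `H(f¹) = H(f⁰) + (1 - x) h(p)`. Both increments are
positive for `0 < p < 1` and `x < 1`.
-/

open Finset

/-- Shannon entropy in bits of a function on `ZMod N`, summed over its support. -/
noncomputable def shannonEntropy2 {N : ℕ} [NeZero N] (f : ZMod N → ℝ) : ℝ :=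
  -∑ l ∈ univ.filter (fun l => f l ≠ 0), f l * Real.logb 2 (f l)

open Real

theorem shannonEntropy2_eq_sum_negMulLog_div {N : ℕ} [NeZero N] (f : ZMod N → ℝ) :
    shannonEntropy2 f = (∑ l, negMulLog (f l)) / log 2 := by
  rw [shannonEntropy2,
    sum_filter_of_ne (p := fun l => f l ≠ 0) fun l _ h hl => h (by rw [hl, zero_mul]),
    sum_div, ← sum_neg_distrib]
  simp only [negMulLog, logb, neg_mul, neg_div, mul_div_assoc]

theorem ZMod.intCast_eq_intCast_iff_of_lt {N : ℕ} {a b : ℤ} (h₁ : a - b < N) (h₂ : b - a < N) :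
    (a : ZMod N) = b ↔ a = b := by
  refine ⟨fun h => ?_, congrArg _⟩
  rw [ZMod.intCast_eq_intCast_iff_dvd_sub] at h
  have := Int.eq_zero_of_abs_lt_dvd h (abs_lt.2 ⟨by omega, by omega⟩)
  omega

theorem ZMod.sum_eq_sum_intCast {M : Type*} [AddCommMonoid M] {N : ℕ} [NeZero N]
    (g : ZMod N → M) (S : Finset ℤ) (a : ℤ) (hS : ∀ k ∈ S, a ≤ k ∧ k < a + N)
    (hg : ∀ l : ZMod N, (∀ k ∈ S, l ≠ k) → g l = 0) :
    ∑ l, g l = ∑ k ∈ S, g k := by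
  have hinj : Set.InjOn (Int.cast : ℤ → ZMod N) S := fun j hj k hk hjk => by
    have := hS j hj
    have := hS k hk
    exact (ZMod.intCast_eq_intCast_iff_of_lt (by omega) (by omega)).1 hjk
  rw [← sum_image hinj]
  refine (sum_subset (subset_univ _) fun l _ hl => hg l fun k hk h => hl ?_).symm
  exact mem_image.2 ⟨k, hk, h.symm⟩

namespace DistanceCertain

variable {N : ℕ} (e : ZMod N) (x p q : ℝ) (d : ℕ)

def f0 (l : ZMod N) : ℝ :=
  if l = e - 1 ∨ l = e + 1 then x else if l = e then 1 - 2*x else 0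

def f1 (l : ZMod N) : ℝ :=
  if l = e - 2 then p * x
    else if l = e - 1 then p * (1 - 2*x)
    else if l = e then x
    else if l = e + 1 then q * (1 - 2*x)
    else if l = e + 2 then q * x
    else 0

def f2 (l : ZMod N) : ℝ :=
  if l = e - d - 1 ∨ l = e - d + 1 then p * x
    else if l = e - d then p * (1 - 2*x)
    else if l = e + d - 1 ∨ l = e + d + 1 then q * x
    else if l = e + d then q * (1 - 2*x)
    else 0

variable [NeZero N]

theorem sum_negMulLog_f0 (hN : 2 < N) :
    ∑ l, negMulLog (f0 e x l) = 2 * negMulLog x + negMulLog (1 - 2 * x) := by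
  -- Lifting `e` to `E : ℤ` makes every point a cast of an integer, so `norm_cast` and
  -- `ZMod.intCast_eq_intCast_iff_of_lt` reduce all the case distinctions to `omega`.
  obtain ⟨E, rfl⟩ := ZMod.intCast_surjective e
  rw [ZMod.sum_eq_sum_intCast _ {E - 1, E, E + 1} (E - 1)
    (fun k hk => by simp only [mem_insert, mem_singleton] at hk; omega)]
  · simp (disch := (simp only [mem_insert, mem_singleton]; omega)) only [sum_insert, sum_singleton]
    simp only [f0]
    norm_cast
    simp (disch := omega) only [ZMod.intCast_eq_intCast_iff_of_lt, if_neg, true_or, or_true,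
      if_true]
    ring
  · intro l hl
    simp only [f0]
    norm_cast
    simp_all

theorem sum_negMulLog_f1 (hN : 4 < N) :
    ∑ l, negMulLog (f1 e x p (1 - p) l) = ∑ l, negMulLog (f0 e x l) + (1 - x) * binEntropy p := by
  obtain ⟨E, rfl⟩ := ZMod.intCast_surjective e
  rw [sum_negMulLog_f0 _ _ (by omega), ZMod.sum_eq_sum_intCast _ {E - 2, E - 1, E, E + 1, E + 2}
    (E - 2) (fun k hk => by simp only [mem_insert, mem_singleton] at hk; omega)]
  · simp (disch := (simp only [mem_insert, mem_singleton]; omega)) only [sum_insert, sum_singleton]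
    simp only [f1]
    norm_cast
    simp (disch := omega) only [ZMod.intCast_eq_intCast_iff_of_lt, if_neg, if_true]
    simp only [negMulLog_mul, binEntropy_eq_negMulLog_add_negMulLog_one_sub]
    ring
  · intro l hl
    simp only [f1]
    norm_cast
    simp_all

theorem sum_negMulLog_f2 (hd : 2 ≤ d) (hdN : 2 * d + 2 < N) :
    ∑ l, negMulLog (f2 e x p (1 - p) d l) = ∑ l, negMulLog (f0 e x l) + binEntropy p := by
  obtain ⟨E, rfl⟩ := ZMod.intCast_surjective e
  rw [sum_negMulLog_f0 _ _ (by omega), ZMod.sum_eq_sum_intCast _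
    {E - d - 1, E - d, E - d + 1, E + d - 1, E + d, E + d + 1} (E - d - 1)
    (fun k hk => by simp only [mem_insert, mem_singleton] at hk; omega)]
  · simp (disch := (simp only [mem_insert, mem_singleton]; omega)) only [sum_insert, sum_singleton]
    simp only [f2]
    norm_cast
    simp (disch := omega) only [ZMod.intCast_eq_intCast_iff_of_lt, if_neg, true_or, or_true,
      if_true]
    simp only [negMulLog_mul, binEntropy_eq_negMulLog_add_negMulLog_one_sub]
    ring
  · intro l hl
    simp only [f2]
    norm_cast
    simp_all

end DistanceCertain

theorem entropy_f0_lt_f1_and_f2_general (N : ℕ) [NeZero N]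
    (x : ℝ) (hx1 : x < 1/3)
    (p q : ℝ) (hp0 : 0 < p) (hp1 : p < 1) (hq : q = 1 - p)
    (e : ZMod N) (d : ℕ) (hd2 : 2 ≤ d) (hdN : 2 * d + 2 < N)
    (f0 f1 f2 : ZMod N → ℝ)
    (hf0 : ∀ l : ZMod N,
      f0 l = if l = e - 1 ∨ l = e + 1 then x else if l = e then 1 - 2*x else 0)
    (hf1 : ∀ l : ZMod N,
      f1 l = if l = e - 2 then p * x
        else if l = e - 1 then p * (1 - 2*x)
        else if l = e then x
        else if l = e + 1 then q * (1 - 2*x)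
        else if l = e + 2 then q * x
        else 0)
    (hf2 : ∀ l : ZMod N,
      f2 l = if l = e - d - 1 ∨ l = e - d + 1 then p * x
        else if l = e - d then p * (1 - 2*x)
        else if l = e + d - 1 ∨ l = e + d + 1 then q * x
        else if l = e + d then q * (1 - 2*x)
        else 0) :
    shannonEntropy2 f0 < shannonEntropy2 f1 ∧
    shannonEntropy2 f0 < shannonEntropy2 f2 := by
  subst hq
  obtain rfl : f0 = DistanceCertain.f0 e x := funext hf0
  obtain rfl : f1 = DistanceCertain.f1 e x p (1 - p) := funext hf1
  obtain rfl : f2 = DistanceCertain.f2 e x p (1 - p) d := funext hf2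
  have hh : 0 < binEntropy p := binEntropy_pos hp0 hp1
  have hlog : 0 < log 2 := log_pos one_lt_two
  simp only [shannonEntropy2_eq_sum_negMulLog_div, DistanceCertain.sum_negMulLog_f1 e x p (by omega),
    DistanceCertain.sum_negMulLog_f2 e x p d hd2 hdN]
  constructor <;> apply div_lt_div_of_pos_right _ hlog <;> nlinarith

/-- with `1/4 < x < 1/3`, the entropy of the state-`0` PMF `f⁰` is
strictly smaller than the entropies of the state-`1` PMF `f¹` and the state-`2`
PMF `f²`; hence the information state `I⁰⁻` is the most informed one. -/
theorem entropy_f0_lt_f1_and_f2 (N : ℕ) [NeZero N] (hN : 8 ≤ N)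
    (x : ℝ) (hx0 : 1/4 < x) (hx1 : x < 1/3)
    (p q : ℝ) (hp0 : 0 < p) (hp1 : p < 1) (hq : q = 1 - p)
    (e : ZMod N) (d : ℕ) (hd2 : 2 ≤ d) (hdN : 2 * d + 2 < N)
    (f0 f1 f2 : ZMod N → ℝ)
    (hf0 : ∀ l : ZMod N,
      f0 l = if l = e - 1 ∨ l = e + 1 then x else if l = e then 1 - 2*x else 0)
    (hf1 : ∀ l : ZMod N,
      f1 l = if l = e - 2 then p * x
        else if l = e - 1 then p * (1 - 2*x)
        else if l = e then x
        else if l = e + 1 then q * (1 - 2*x)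
        else if l = e + 2 then q * x
        else 0)
    (hf2 : ∀ l : ZMod N,
      f2 l = if l = e - d - 1 ∨ l = e - d + 1 then p * x
        else if l = e - d then p * (1 - 2*x)
        else if l = e + d - 1 ∨ l = e + d + 1 then q * x
        else if l = e + d then q * (1 - 2*x)
        else 0) :
    shannonEntropy2 f0 < shannonEntropy2 f1 ∧
    shannonEntropy2 f0 < shannonEntropy2 f2 :=
  entropy_f0_lt_f1_and_f2_general N x hx1 p q hp0 hp1 hq e d hd2 hdN f0 f1 f2 hf0 hf1 hf2
end

section
/- Let 0 < x < 1/2 and let M be the 3 \times 3 real matrix M = [[1-2x, 2x, 0], [x, 1-2x, x], [1-x, x, 0]] (the transition matrix of the Maximum Likelihood strategy restricted to the information states \mathcal{I}^{0-}, \mathcal{I}^{1-}, \mathcal{I}^{2-}). Then the row vector \pi = ((2-x)/(4+x), 2/(4+x), 2x/(4+x)) has positive entries summing to 1 and satisfies \pi M = \pi; moreover \pi is the unique row vector with nonnegative entries summing to 1 satisfying \pi M = \pi. -/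
open Matrix

/-!
Up to scaling, `v = (2 - x, 2, 2x)` is the only left fixed vector of `M`: the third column of
`ρ M = ρ` reads `ρ₂ = x ρ₁`, and substituting this into the first column leaves
`x (2ρ₀ - (2 - x) ρ₁) = 0`. As the entries of `v` sum to `4 + x`, the unique normalized fixed
vector is `v / (4 + x)`, which is positive because `0 < x < 2`.
-/

section Normalization

variable {ι K : Type*} [Fintype ι] [Field K]

theorem eq_inv_sum_of_sum_smul_eq_one {c : K} {v : ι → K} (h : ∑ i, (c • v) i = 1) :
    c = (∑ i, v i)⁻¹ := by
  simp only [Pi.smul_apply, smul_eq_mul, ← Finset.mul_sum] at h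
  exact eq_inv_of_mul_eq_one_left h

end Normalization

namespace MaxLikelihood

def transition (x : ℝ) : Matrix (Fin 3) (Fin 3) ℝ :=
  !![1 - 2*x, 2*x, 0; x, 1 - 2*x, x; 1 - x, x, 0]

def stationaryDirection (x : ℝ) : Fin 3 → ℝ :=
  ![2 - x, 2, 2 * x]

theorem sum_stationaryDirection (x : ℝ) : ∑ i, stationaryDirection x i = 4 + x := by
  rw [Fin.sum_univ_three]
  simp only [stationaryDirection, cons_val_zero, cons_val_one, cons_val_two, head_cons, tail_cons]
  ring

theorem stationaryDirection_pos {x : ℝ} (hx0 : 0 < x) (hx2 : x < 2) (i : Fin 3) :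
    0 < stationaryDirection x i := by
  fin_cases i <;> simp [stationaryDirection] <;> linarith

theorem vecMul_transition (x : ℝ) (ρ : Fin 3 → ℝ) :
    ρ ᵥ* transition x =
      ![(1 - 2*x) * ρ 0 + x * ρ 1 + (1 - x) * ρ 2,
        2*x * ρ 0 + (1 - 2*x) * ρ 1 + x * ρ 2,
        x * ρ 1] := by
  ext j
  fin_cases j <;> simp [transition, vecMul, dotProduct, Fin.sum_univ_three] <;> ring

theorem stationaryDirection_vecMul_transition (x : ℝ) :
    stationaryDirection x ᵥ* transition x = stationaryDirection x := by
  rw [vecMul_transition]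
  ext j
  fin_cases j <;> simp [stationaryDirection] <;> ring

theorem vecMul_transition_eq_self_iff {x : ℝ} (hx : x ≠ 0) (ρ : Fin 3 → ℝ) :
    ρ ᵥ* transition x = ρ ↔ ∃ c : ℝ, ρ = c • stationaryDirection x := by
  constructor
  · intro hfix
    have h0 := congrFun hfix 0
    have h2 := congrFun hfix 2
    simp only [vecMul_transition, Fin.isValue, cons_val_zero, cons_val_two, tail_cons,
      head_cons] at h0 h2
    have hρ0 : 2 * ρ 0 = (2 - x) * ρ 1 :=
      mul_left_cancel₀ hx (by linear_combination -h0 - (1 - x) * h2)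
    refine ⟨ρ 1 / 2, ?_⟩
    ext j
    fin_cases j <;> simp [stationaryDirection] <;> linarith
  · rintro ⟨c, rfl⟩
    rw [smul_vecMul, stationaryDirection_vecMul_transition]

end MaxLikelihood

open MaxLikelihood

/-- the row vector `((2-x)/(4+x), 2/(4+x), 2x/(4+x))` is the unique
stationary distribution of the Maximum Likelihood strategy transition matrix
`[[1-2x, 2x, 0], [x, 1-2x, x], [1-x, x, 0]]`. -/
theorem mlc_stationary_distribution (x : ℝ) (hx0 : 0 < x) (hx1 : x < 1/2)
    (M : Matrix (Fin 3) (Fin 3) ℝ)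
    (hM : M = !![1 - 2*x, 2*x, 0; x, 1 - 2*x, x; 1 - x, x, 0])
    (π : Fin 3 → ℝ) (hπ : π = ![(2-x)/(4+x), 2/(4+x), 2*x/(4+x)]) :
    (∀ i, 0 < π i) ∧ (∑ i, π i = 1) ∧ π ᵥ* M = π ∧
    (∀ ρ : Fin 3 → ℝ, (∀ i, 0 ≤ ρ i) → (∑ i, ρ i = 1) → ρ ᵥ* M = ρ → ρ = π) := by
  have hsum : 0 < ∑ i, stationaryDirection x i := by
    rw [sum_stationaryDirection]; linarith
  have hπ' : π = (∑ i, stationaryDirection x i)⁻¹ • stationaryDirection x := by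
    rw [hπ, sum_stationaryDirection]
    ext j
    fin_cases j <;> simp [stationaryDirection, div_eq_inv_mul]
  have hM' : M = transition x := hM
  subst hπ' hM'
  refine ⟨fun i => ?_, ?_, ?_, fun ρ _ hρ hfix => ?_⟩
  · exact smul_pos (inv_pos.2 hsum) (stationaryDirection_pos hx0 (by linarith) i)
  · simp only [Pi.smul_apply, smul_eq_mul, ← Finset.mul_sum, inv_mul_cancel₀ hsum.ne']
  · exact (vecMul_transition_eq_self_iff hx0.ne' _).2 ⟨_, rfl⟩
  · obtain ⟨c, rfl⟩ := (vecMul_transition_eq_self_iff hx0.ne' ρ).1 hfix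
    rw [eq_inv_sum_of_sum_smul_eq_one hρ]
end

section
/- Let 1/4 < x < 1/3 and define \varphi(x) = 2x \log_2 x + (1-2x) \log_2 (1-2x), H_0 = -\varphi(x), H_1 = -\varphi(x) + 1 - x, H_2 = -\varphi(x) + 1. Define the stationary-average entropies \bar{H}_{ITC} = H_0, \bar{H}_{mMLC} = (1/(1+2x)) H_0 + (2x/(1+2x)) H_1, and \bar{H}_{MLC} = ((2-x) H_0 + 2 H_1 + 2x H_2)/(4+x). Then \bar{H}_{mMLC} = -\varphi(x) + 2x(1-x)/(1+2x), \bar{H}_{MLC} = -\varphi(x) + 2/(4+x), and the strict ordering \bar{H}_{ITC} < \bar{H}_{mMLC} < \bar{H}_{MLC} holds. Thus the Infomax strategy attains the lowest long-run mean entropy of the source-location estimate, followed by the Hybrid strategy, then the Maximum Likelihood strategy. -/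
/-! All three mean entropies are `-φ(x)` plus an excess that does not involve `φ`, so the ordering
is a comparison of the excesses `0 < 2x(1-x)/(1+2x) < 2/(4+x)`. Clearing denominators, the second
inequality becomes `x³ + 3x² - 2x + 1 > 0`, which holds for `x ≥ 0` since `3x² - 2x + 1` has
negative discriminant. -/

theorem hybrid_mean_entropy_eq {x : ℝ} (hx : 1 + 2*x ≠ 0) (h : ℝ) :
    1/(1+2*x) * h + 2*x/(1+2*x) * (h + 1 - x) = h + 2*x*(1-x)/(1+2*x) := by
  field_simp
  ring

theorem maxLikelihood_mean_entropy_eq {x : ℝ} (hx : 4 + x ≠ 0) (h : ℝ) :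
    ((2-x) * h + 2 * (h + 1 - x) + 2*x * (h + 1)) / (4+x) = h + 2/(4+x) := by
  field_simp
  ring

theorem hybrid_excess_pos {x : ℝ} (hx0 : 0 < x) (hx1 : x < 1) :
    0 < 2*x*(1-x)/(1+2*x) := by
  have : 0 < 1 - x := by linarith
  positivity

theorem hybrid_excess_lt_maxLikelihood_excess {x : ℝ} (hx : 0 ≤ x) :
    2*x*(1-x)/(1+2*x) < 2/(4+x) := by
  rw [div_lt_div_iff₀ (by linarith) (by linarith)]
  nlinarith [pow_nonneg hx 3, sq_nonneg (3*x - 1)]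

theorem mean_entropy_ordering_general (x : ℝ) (hx0 : 1/4 < x) (hx1 : x < 1/3)
    (φ H0 H1 H2 HITC HmMLC HMLC : ℝ)
    (hH0 : H0 = -φ) (hH1 : H1 = -φ + 1 - x) (hH2 : H2 = -φ + 1)
    (hITC : HITC = H0)
    (hmMLC : HmMLC = (1/(1+2*x)) * H0 + (2*x/(1+2*x)) * H1)
    (hMLC : HMLC = ((2-x) * H0 + 2 * H1 + 2*x * H2) / (4+x)) :
    HmMLC = -φ + 2*x*(1-x)/(1+2*x) ∧
    HMLC = -φ + 2/(4+x) ∧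
    HITC < HmMLC ∧ HmMLC < HMLC := by
  subst hH0 hH1 hH2 hITC hmMLC hMLC
  rw [hybrid_mean_entropy_eq (by linarith), maxLikelihood_mean_entropy_eq (by linarith)]
  have hpos := hybrid_excess_pos (by linarith) (by linarith : x < 1)
  have hlt := hybrid_excess_lt_maxLikelihood_excess (by linarith : 0 ≤ x)
  exact ⟨rfl, rfl, by linarith, by linarith⟩

/-- for `1/4 < x < 1/3`, with `φ(x) = 2x log₂ x + (1-2x) log₂(1-2x)`,
`H₀ = -φ(x)`, `H₁ = -φ(x)+1-x`, `H₂ = -φ(x)+1`, the stationary-average entropies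
satisfy `H̄_mMLC = -φ(x) + 2x(1-x)/(1+2x)`, `H̄_MLC = -φ(x) + 2/(4+x)`, and
`H̄_ITC < H̄_mMLC < H̄_MLC`. -/
theorem mean_entropy_ordering (x : ℝ) (hx0 : 1/4 < x) (hx1 : x < 1/3)
    (φ H0 H1 H2 HITC HmMLC HMLC : ℝ)
    (hφ : φ = 2*x*Real.logb 2 x + (1-2*x)*Real.logb 2 (1-2*x))
    (hH0 : H0 = -φ) (hH1 : H1 = -φ + 1 - x) (hH2 : H2 = -φ + 1)
    (hITC : HITC = H0)
    (hmMLC : HmMLC = (1/(1+2*x)) * H0 + (2*x/(1+2*x)) * H1)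
    (hMLC : HMLC = ((2-x) * H0 + 2 * H1 + 2*x * H2) / (4+x)) :
    HmMLC = -φ + 2*x*(1-x)/(1+2*x) ∧
    HMLC = -φ + 2/(4+x) ∧
    HITC < HmMLC ∧ HmMLC < HMLC :=
  mean_entropy_ordering_general x hx0 hx1 φ H0 H1 H2 HITC HmMLC HMLC hH0 hH1 hH2 hITC hmMLC hMLC
end
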